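/- arXiv:2103.08693 — 6 statements merged into one kernel-verified Lean document; each statement's English description precedes it below -/
import Mathlib

section
/- Let {a_n} be a sequence of nonnegative real numbers such that there exists a subsequence {a_{n_j}} with a_{n_j} < a_{n_j+1} for all j ∈ ℕ. Then there exists a nondecreasing sequence {m_k} of natural numbers with m_k → ∞ such that for all sufficiently large k, a_{m_k} ≤ a_{m_k+1} and a_k ≤ a_{m_k+1}. -/
open Filter Finset

open Classical in
noncomputable def gmax (a : ℕ → ℝ) (l r : ℕ) : ℕ :=
  if h : (Finset.Icc l r).Nonempty then
    ((Finset.Icc l r).filter fun s => ∀ s' ∈ Finset.Icc l r, a s' ≤ a s).max'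
      (by
        obtain ⟨b, hb, hmax⟩ := Finset.exists_max_image (Finset.Icc l r) a h
        exact ⟨b, Finset.mem_filter.2 ⟨hb, hmax⟩⟩)
  else l

lemma gmax_spec (a : ℕ → ℝ) {l r : ℕ} (h : l ≤ r) :
    gmax a l r ∈ Finset.Icc l r ∧ ∀ s ∈ Finset.Icc l r, a s ≤ a (gmax a l r) := by
  classical
  have hne : (Finset.Icc l r).Nonempty := by simp [h]
  unfold gmax
  rw [dif_pos hne]
  have := Finset.max'_mem ((Finset.Icc l r).filter fun s => ∀ s' ∈ Finset.Icc l r, a s' ≤ a s)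
    (by
      obtain ⟨b, hb, hmax⟩ := Finset.exists_max_image (Finset.Icc l r) a hne
      exact ⟨b, Finset.mem_filter.2 ⟨hb, hmax⟩⟩)
  rw [Finset.mem_filter] at this
  exact this

lemma gmax_ge (a : ℕ → ℝ) {l r s : ℕ} (h : l ≤ r) (hs : s ∈ Finset.Icc l r)
    (hval : a (gmax a l r) ≤ a s) : s ≤ gmax a l r := by
  classical
  have hne : (Finset.Icc l r).Nonempty := by simp [h]
  have hmax : ∀ s' ∈ Finset.Icc l r, a s' ≤ a s :=
    fun s' hs' => ((gmax_spec a h).2 s' hs').trans hval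
  conv_rhs => unfold gmax
  rw [dif_pos hne]
  exact Finset.le_max' _ _ (Finset.mem_filter.2 ⟨hs, hmax⟩)

lemma gmax_mono (a : ℕ → ℝ) {l r l' r' : ℕ} (hl : l ≤ l') (hr : r ≤ r')
    (h : l ≤ r) (h' : l' ≤ r') : gmax a l r ≤ gmax a l' r' := by
  obtain ⟨ht, hmax⟩ := gmax_spec a h
  obtain ⟨ht', hmax'⟩ := gmax_spec a h'
  set t := gmax a l r
  set t' := gmax a l' r'
  simp only [Finset.mem_Icc] at ht ht'
  rcases lt_or_ge t l' with hc | hc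
  · exact hc.le.trans ht'.1
  rcases lt_or_ge r t' with hc2 | hc2
  · exact (ht.2.trans hc2.le).trans (le_refl _) |>.trans (le_refl _) |>.trans (by omega)
  · -- t' ≤ r, so t' ∈ Icc l r and t ∈ Icc l' r'
    have h1 : a t ≤ a t' := hmax' t (Finset.mem_Icc.2 ⟨hc, ht.2.trans hr⟩)
    have h2 : a t' ≤ a t := hmax t' (Finset.mem_Icc.2 ⟨hl.trans ht'.1, hc2⟩)
    exact gmax_ge a h' (Finset.mem_Icc.2 ⟨hc, ht.2.trans hr⟩) h2

theorem stmt_3 (a : ℕ → ℝ) (ha : ∀ n, 0 ≤ a n)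
    (n : ℕ → ℕ) (hn : StrictMono n) (hsub : ∀ j, a (n j) < a (n j + 1)) :
    ∃ m : ℕ → ℕ, Monotone m ∧ Tendsto m atTop atTop ∧
      ∃ N, ∀ k ≥ N, a (m k) ≤ a (m k + 1) ∧ a k ≤ a (m k + 1) := by
  classical
  set N := n 0 + 1 with hN
  -- left endpoint helper
  set J : ℕ → ℕ := fun k => Nat.findGreatest (fun j => n j + 1 ≤ k) k with hJ
  set L : ℕ → ℕ := fun k => n (J k) + 1 with hL
  set R : ℕ → ℕ := fun k => n k + 1 with hR
  -- basic window facts for k ≥ N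
  have hLk : ∀ k, N ≤ k → L k ≤ k := by
    intro k hk
    exact Nat.findGreatest_spec (P := fun j => n j + 1 ≤ k) (Nat.zero_le k) hk
  have hkR : ∀ k, k ≤ R k := fun k => (hn.id_le k).trans (Nat.le_succ _)
  have hLR : ∀ k, N ≤ k → L k ≤ R k := fun k hk => (hLk k hk).trans (hkR k)
  have hJmono : ∀ ⦃k1 k2 : ℕ⦄, k1 ≤ k2 → J k1 ≤ J k2 := by
    intro k1 k2 h
    exact Nat.findGreatest_mono (fun j hj => hj.trans h) h
  have hLmono : ∀ ⦃k1 k2 : ℕ⦄, k1 ≤ k2 → L k1 ≤ L k2 := by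
    intro k1 k2 h
    exact Nat.succ_le_succ (hn.monotone (hJmono h))
  have hRmono : ∀ ⦃k1 k2 : ℕ⦄, k1 ≤ k2 → R k1 ≤ R k2 := by
    intro k1 k2 h
    exact Nat.succ_le_succ (hn.monotone h)
  refine ⟨fun k => gmax a (L (max k N)) (R (max k N)) - 1, ?_, ?_, ?_⟩
  · -- Monotone
    intro k1 k2 h
    have h' : max k1 N ≤ max k2 N := max_le_max h le_rfl
    exact Nat.sub_le_sub_right
      (gmax_mono a (hLmono h') (hRmono h')
        (hLR _ (le_max_right _ _)) (hLR _ (le_max_right _ _))) 1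
  · -- Tendsto atTop
    rw [tendsto_atTop]
    intro b
    filter_upwards [eventually_ge_atTop (n b + 1)] with k hk
    have hkN : N ≤ k := le_trans (Nat.succ_le_succ (hn.monotone (Nat.zero_le b))) hk
    have hmax : max k N = k := max_eq_left hkN
    rw [hmax]
    have hJb : b ≤ J k := Nat.le_findGreatest ((hn.id_le b).trans (Nat.le_of_succ_le hk)) hk
    have h1 : L k ≤ gmax a (L k) (R k) :=
      (Finset.mem_Icc.1 (gmax_spec a (hLR k hkN)).1).1
    have : n b ≤ n (J k) := hn.monotone hJb
    calc b ≤ n b := hn.id_le b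
      _ ≤ n (J k) := this
      _ ≤ gmax a (L k) (R k) - 1 := by
          have : n (J k) + 1 ≤ gmax a (L k) (R k) := h1
          omega
  · -- the estimates
    refine ⟨N, fun k hk => ?_⟩
    have hmax : max k N = k := max_eq_left hk
    simp only [hmax]
    obtain ⟨htmem, htmax⟩ := gmax_spec a (hLR k hk)
    set t := gmax a (L k) (R k) with hT
    clear_value t
    rw [Finset.mem_Icc] at htmem
    have hLdef : L k = n (J k) + 1 := rfl
    have hRdef : R k = n k + 1 := rfl
    have ht1 : 1 ≤ t := le_trans (Nat.succ_le_succ (Nat.zero_le _)) htmem.1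
    have hco : t - 1 + 1 = t := Nat.sub_add_cancel ht1
    rw [hco]
    constructor
    · rcases eq_or_lt_of_le htmem.1 with he | hlt
      · -- t is the left endpoint n (J k) + 1
        have he' : n (J k) + 1 = t := hLdef ▸ he
        have h2 : t - 1 = n (J k) := by omega
        rw [h2, ← he']
        exact (hsub (J k)).le
      · have hlt' : n (J k) + 1 < t := hLdef ▸ hlt
        have h2 : t ≤ n k + 1 := hRdef ▸ htmem.2
        exact htmax (t - 1) (Finset.mem_Icc.2 ⟨by rw [hLdef]; omega, by rw [hRdef]; omega⟩)
    · exact htmax k (Finset.mem_Icc.2 ⟨hLk k hk, hkR k⟩)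
end

section
/- Let C be a nonempty closed convex subset of a real Hilbert space H, let A: C → H be monotone and L-Lipschitz continuous, let λ ∈ (0,1) with λL < 1, and let p ∈ VI(C,A) (i.e., ⟨Ap, y-p⟩ ≥ 0 for all y ∈ C). For x ∈ C, set y = P_C(x - λAx) and z = y - λ(Ay - Ax). Then ‖z - p‖² ≤ ‖x - p‖² - (1-(λL)²)‖x - y‖². -/
open RealInnerProductSpace

theorem stmt_4 {H : Type*} [NormedAddCommGroup H] [InnerProductSpace ℝ H] [CompleteSpace H]
    (C : Set H) (hC : C.Nonempty) (hclosed : IsClosed C) (hconv : Convex ℝ C)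
    (A : H → H) (L : ℝ) (hL : 0 < L)
    (hmono : ∀ u ∈ C, ∀ v ∈ C, 0 ≤ ⟪A u - A v, u - v⟫)
    (hlip : ∀ u ∈ C, ∀ v ∈ C, ‖A u - A v‖ ≤ L * ‖u - v‖)
    (lam : ℝ) (hlam : lam ∈ Set.Ioo (0 : ℝ) 1) (hlamL : lam * L < 1)
    (P : H → H) (hPmem : ∀ u, P u ∈ C) (hPmin : ∀ u, ∀ w ∈ C, ‖u - P u‖ ≤ ‖u - w‖)
    (p : H) (hp : p ∈ C) (hpVI : ∀ w ∈ C, 0 ≤ ⟪A p, w - p⟫)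
    (x : H) (hx : x ∈ C)
    (y z : H) (hy : y = P (x - lam • A x)) (hz : z = y - lam • (A y - A x)) :
    ‖z - p‖ ^ 2 ≤ ‖x - p‖ ^ 2 - (1 - (lam * L) ^ 2) * ‖x - y‖ ^ 2 := by
  -- projection characterization
  haveI : Nonempty C := hC.to_subtype
  have proj : ∀ u : H, ∀ w ∈ C, ⟪u - P u, w - P u⟫ ≤ 0 := by
    intro u
    have hinf : ‖u - P u‖ = ⨅ w : C, ‖u - w‖ := by
      refine le_antisymm (le_ciInf fun w => hPmin u w w.2) ?_
      have hbd : BddBelow (Set.range fun w : C => ‖u - (w : H)‖) :=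
        ⟨0, by rintro b ⟨w, rfl⟩; positivity⟩
      exact ciInf_le hbd ⟨P u, hPmem u⟩
    exact (norm_eq_iInf_iff_real_inner_le_zero hconv (hPmem u)).1 hinf
  have hyC : y ∈ C := hy ▸ hPmem _
  set e := A y - A x with he
  have K1 : ⟪(x - lam • A x) - y, p - y⟫ ≤ 0 := by
    rw [hy]; exact proj _ p hp
  have K2 : 0 ≤ ⟪A y, y - p⟫ := by
    have h1 := hmono y hyC p hp
    have h2 := hpVI y hyC
    have : ⟪A y, y - p⟫ = ⟪A y - A p, y - p⟫ + ⟪A p, y - p⟫ := by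
      rw [inner_sub_left]; ring
    linarith [this ▸ add_nonneg h1 h2]
  have K3 : ‖e‖ ≤ L * ‖x - y‖ := by
    have := hlip y hyC x hx
    rwa [norm_sub_rev y x] at this
  have K3sq : ‖e‖ ^ 2 ≤ (L * ‖x - y‖) ^ 2 := by
    have h0 : (0:ℝ) ≤ ‖e‖ := norm_nonneg _
    nlinarith
  have hzp : z - p = (y - p) - lam • e := by rw [hz]; abel
  have h1 : ‖z - p‖ ^ 2 = ‖y - p‖ ^ 2 - 2 * lam * ⟪y - p, e⟫ + lam ^ 2 * ‖e‖ ^ 2 := by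
    rw [hzp, @norm_sub_sq_real, real_inner_smul_right, norm_smul, Real.norm_eq_abs,
      mul_pow, sq_abs]
    ring
  have h2 : ‖y - p‖ ^ 2 = ‖x - p‖ ^ 2 - ‖x - y‖ ^ 2 - 2 * ⟪x - y, y - p⟫ := by
    have hxp : x - p = (x - y) + (y - p) := by abel
    rw [hxp, @norm_add_sq_real]
    ring
  have key : 0 ≤ ⟪x - y, y - p⟫ + lam * ⟪e, y - p⟫ := by
    have hid : ⟪x - y, y - p⟫ + lam * ⟪e, y - p⟫
        = -⟪(x - lam • A x) - y, p - y⟫ + lam * ⟪A y, y - p⟫ := by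
      simp only [he, inner_sub_left, inner_sub_right, real_inner_smul_left]
      ring
    rw [hid]
    have := mul_nonneg hlam.1.le K2
    linarith
  have hsym : ⟪y - p, e⟫ = ⟪e, y - p⟫ := real_inner_comm _ _
  have hlam0 := hlam.1
  nlinarith [key, K3sq, h1, h2, hsym]
end

section
/- Let C be a nonempty closed convex subset of a real Hilbert space H, A: C → H monotone and L-Lipschitz, λ ∈ (0, 1/L). Suppose {x_n} ⊂ C is bounded, x_{n_k} converges weakly to some x ∈ C, and with y_n = P_C(x_n - λ A x_n) we have ‖x_{n_k} - y_{n_k}‖ → 0. Then x ∈ VI(C,A). -/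
open RealInnerProductSpace Filter

theorem stmt_6 {H : Type*} [NormedAddCommGroup H] [InnerProductSpace ℝ H] [CompleteSpace H]
    (C : Set H) (hC : C.Nonempty) (hclosed : IsClosed C) (hconv : Convex ℝ C)
    (A : H → H) (L : ℝ) (hL : 0 < L)
    (hmono : ∀ u ∈ C, ∀ v ∈ C, 0 ≤ ⟪A u - A v, u - v⟫)
    (hlip : ∀ u ∈ C, ∀ v ∈ C, ‖A u - A v‖ ≤ L * ‖u - v‖)
    (lam : ℝ) (hlam : lam ∈ Set.Ioo (0 : ℝ) (1 / L))
    (P : H → H) (hPmem : ∀ u, P u ∈ C) (hPmin : ∀ u, ∀ w ∈ C, ‖u - P u‖ ≤ ‖u - w‖)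
    (x : ℕ → H) (hxC : ∀ n, x n ∈ C) (hbdd : ∃ M, ∀ n, ‖x n‖ ≤ M)
    (y : ℕ → H) (hy : ∀ n, y n = P (x n - lam • A (x n)))
    (k : ℕ → ℕ) (hk : StrictMono k)
    (x' : H) (hx' : x' ∈ C)
    (hweak : ∀ v : H, Tendsto (fun j => ⟪x (k j), v⟫) atTop (nhds ⟪x', v⟫))
    (hdiff : Tendsto (fun j => ‖x (k j) - y (k j)‖) atTop (nhds 0)) :
    ∀ w ∈ C, 0 ≤ ⟪A x', w - x'⟫ := by
  obtain ⟨M, hM⟩ := hbdd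
  obtain ⟨hlam0, hlam1⟩ := hlam
  have hlampos : 0 < lam := hlam0
  -- projection variational inequality
  have hproj : ∀ u : H, ∀ w ∈ C, ⟪u - P u, w - P u⟫ ≤ 0 := by
    intro u w hw
    have hnonempty : Nonempty C := hC.to_subtype
    have heq : ‖u - P u‖ = ⨅ w : C, ‖u - w‖ := by
      apply le_antisymm
      · exact le_ciInf fun w => hPmin u w w.2
      · have hbd : BddBelow (Set.range fun w : C => ‖u - w‖) := by
          refine ⟨0, ?_⟩
          rintro b ⟨w, rfl⟩
          exact norm_nonneg _
        exact ciInf_le hbd ⟨P u, hPmem u⟩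
    exact (norm_eq_iInf_iff_real_inner_le_zero hconv (hPmem u)).mp heq w hw
  have hyC : ∀ n, y n ∈ C := fun n => (hy n) ▸ hPmem _
  -- Minty step: show 0 ≤ ⟪A w, w - x'⟫ for all w ∈ C
  have hMinty : ∀ w ∈ C, 0 ≤ ⟪A w, w - x'⟫ := by
    intro w hw
    -- weak convergence of y along the subsequence
    have hyweak : ∀ v : H, Tendsto (fun j => ⟪y (k j), v⟫) atTop (nhds ⟪x', v⟫) := by
      intro v
      have h1 : Tendsto (fun j => ⟪y (k j) - x (k j), v⟫) atTop (nhds 0) := by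
        refine squeeze_zero_norm (fun j => ?_) (by simpa using hdiff.mul_const ‖v‖)
        calc ‖⟪y (k j) - x (k j), v⟫‖ = |⟪y (k j) - x (k j), v⟫| := rfl
            _ ≤ ‖y (k j) - x (k j)‖ * ‖v‖ := abs_real_inner_le_norm _ _
            _ = ‖x (k j) - y (k j)‖ * ‖v‖ := by rw [norm_sub_rev]
      have := (hweak v).add h1
      simp only [← inner_add_left] at this
      simpa using this
    -- key inequality along subsequence
    have hineq : ∀ j, -( (L + 1/lam) * ‖x (k j) - y (k j)‖ * ‖w - y (k j)‖)
        ≤ ⟪A w, w - y (k j)⟫ := by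
      intro j
      set n := k j
      have hproj' : ⟪(x n - lam • A (x n)) - y n, w - y n⟫ ≤ 0 := by
        have := hproj (x n - lam • A (x n)) w hw
        rwa [← hy n] at this
      have hsplit : ⟪(x n - lam • A (x n)) - y n, w - y n⟫
          = ⟪x n - y n, w - y n⟫ - lam * ⟪A (x n), w - y n⟫ := by
        have : (x n - lam • A (x n)) - y n = (x n - y n) - lam • A (x n) := by abel
        rw [this, inner_sub_left, real_inner_smul_left]
      have hAx : -(1/lam) * (‖x n - y n‖ * ‖w - y n‖) ≤ ⟪A (x n), w - y n⟫ := by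
        have h1 : ⟪x n - y n, w - y n⟫ ≤ lam * ⟪A (x n), w - y n⟫ := by
          rw [hsplit] at hproj'; linarith
        have h2 : -(‖x n - y n‖ * ‖w - y n‖) ≤ ⟪x n - y n, w - y n⟫ :=
          neg_le_of_abs_le (abs_real_inner_le_norm _ _)
        have h4 : -(‖x n - y n‖ * ‖w - y n‖) / lam ≤ ⟪A (x n), w - y n⟫ := by
          rw [div_le_iff₀ hlampos]
          linarith
        calc -(1/lam) * (‖x n - y n‖ * ‖w - y n‖)
            = -(‖x n - y n‖ * ‖w - y n‖) / lam := by ring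
          _ ≤ _ := h4
      have hmon : ⟪A (y n), w - y n⟫ ≤ ⟪A w, w - y n⟫ := by
        have := hmono w hw (y n) (hyC n)
        rw [inner_sub_left] at this
        linarith
      have hAy : -(L * (‖x n - y n‖ * ‖w - y n‖)) ≤ ⟪A (y n) - A (x n), w - y n⟫ := by
        have h2 : |⟪A (y n) - A (x n), w - y n⟫| ≤ ‖A (y n) - A (x n)‖ * ‖w - y n‖ :=
          abs_real_inner_le_norm _ _
        have h3 : ‖A (y n) - A (x n)‖ ≤ L * ‖y n - x n‖ := hlip (y n) (hyC n) (x n) (hxC n)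
        have h4 : ‖A (y n) - A (x n)‖ * ‖w - y n‖ ≤ L * ‖x n - y n‖ * ‖w - y n‖ := by
          rw [norm_sub_rev (y n)] at h3
          exact mul_le_mul_of_nonneg_right h3 (norm_nonneg _)
        have := neg_le_of_abs_le h2
        nlinarith [norm_nonneg (w - y n)]
      have hsum : ⟪A (y n) - A (x n), w - y n⟫ + ⟪A (x n), w - y n⟫ = ⟪A (y n), w - y n⟫ := by
        rw [← inner_add_left]; congr 1; abel
      nlinarith [hmon]
    -- limits
    have hflim : Tendsto (fun j => ⟪A w, w - y (k j)⟫) atTop (nhds ⟪A w, w - x'⟫) := by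
      have h1 : Tendsto (fun j => ⟪y (k j), A w⟫) atTop (nhds ⟪x', A w⟫) := hyweak (A w)
      have h2 : Tendsto (fun j => ⟪A w, w⟫ - ⟪y (k j), A w⟫) atTop
          (nhds (⟪A w, w⟫ - ⟪x', A w⟫)) := tendsto_const_nhds.sub h1
      convert h2 using 2 with j
      · rw [inner_sub_right, real_inner_comm (y (k j))]
      · rw [inner_sub_right, real_inner_comm x']
    -- the lower bound tends to 0
    have hbound : ∀ᶠ j in atTop, ‖w - y (k j)‖ ≤ ‖w‖ + M + 1 := by
      have h1 : ∀ᶠ j in atTop, ‖x (k j) - y (k j)‖ < 1 := by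
        have := hdiff.eventually (eventually_lt_nhds (by norm_num : (0:ℝ) < 1))
        exact this
      filter_upwards [h1] with j hj
      calc ‖w - y (k j)‖ = ‖(w - x (k j)) + (x (k j) - y (k j))‖ := by congr 1; abel
        _ ≤ ‖w - x (k j)‖ + ‖x (k j) - y (k j)‖ := norm_add_le _ _
        _ ≤ (‖w‖ + ‖x (k j)‖) + 1 := by
            have := norm_sub_le w (x (k j)); linarith
        _ ≤ ‖w‖ + M + 1 := by have := hM (k j); linarith
    have hc : 0 ≤ L + 1/lam := by positivity
    have hglim : Tendsto (fun j => -((L + 1/lam) * ‖x (k j) - y (k j)‖ * (‖w‖ + M + 1)))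
        atTop (nhds 0) := by
      have := (hdiff.const_mul (L + 1/lam)).mul_const (‖w‖ + M + 1)
      have := this.neg
      simpa using this
    refine le_of_tendsto_of_tendsto hglim hflim ?_
    filter_upwards [hbound] with j hj
    have h1 := hineq j
    have h2 : (L + 1/lam) * ‖x (k j) - y (k j)‖ * ‖w - y (k j)‖
        ≤ (L + 1/lam) * ‖x (k j) - y (k j)‖ * (‖w‖ + M + 1) := by
      apply mul_le_mul_of_nonneg_left hj
      positivity
    linarith
  -- Minty's trick
  intro w hw
  have key : ∀ t : ℝ, 0 < t → t ≤ 1 → -(t * (L * ‖w - x'‖^2)) ≤ ⟪A x', w - x'⟫ := by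
    intro t ht0 ht1
    set wt := x' + t • (w - x') with hwt
    have hwtC : wt ∈ C := by
      have := hconv hx' hw (by linarith : (0:ℝ) ≤ 1 - t) (le_of_lt ht0) (by ring)
      convert this using 1
      rw [hwt]
      module
    have h1 : 0 ≤ ⟪A wt, wt - x'⟫ := hMinty wt hwtC
    have h2 : wt - x' = t • (w - x') := by rw [hwt]; abel
    have h3 : 0 ≤ ⟪A wt, w - x'⟫ := by
      rw [h2, real_inner_smul_right] at h1
      nlinarith
    have h4 : ‖A x' - A wt‖ ≤ L * (t * ‖w - x'‖) := by
      have := hlip x' hx' wt hwtC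
      have h5 : ‖x' - wt‖ = t * ‖w - x'‖ := by
        rw [hwt]
        have : x' - (x' + t • (w - x')) = (-t) • (w - x') := by module
        rw [this, norm_smul]
        simp [abs_of_pos ht0]
      rw [h5] at this
      exact this
    have h6 : -(‖A x' - A wt‖ * ‖w - x'‖) ≤ ⟪A x' - A wt, w - x'⟫ :=
      neg_le_of_abs_le (abs_real_inner_le_norm _ _)
    have h7 : ⟪A x' - A wt, w - x'⟫ + ⟪A wt, w - x'⟫ = ⟪A x', w - x'⟫ := by
      rw [← inner_add_left]; congr 1; abel
    have h8 : ‖A x' - A wt‖ * ‖w - x'‖ ≤ t * (L * ‖w - x'‖^2) := by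
      have := mul_le_mul_of_nonneg_right h4 (norm_nonneg (w - x'))
      nlinarith [norm_nonneg (w - x')]
    linarith
  by_contra hneg
  push_neg at hneg
  set ε := -⟪A x', w - x'⟫ with hε
  have hεpos : 0 < ε := by simp [hε]; linarith
  set D := L * ‖w - x'‖^2 with hD
  have hD0 : 0 ≤ D := by positivity
  set t := min 1 (ε / (2 * (D + 1))) with ht
  have ht0 : 0 < t := lt_min one_pos (by positivity)
  have ht1 : t ≤ 1 := min_le_left _ _
  have h := key t ht0 ht1
  have htD : t * D ≤ ε / 2 := by
    have h1 : t ≤ ε / (2 * (D + 1)) := min_le_right _ _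
    have h2 : t * D ≤ (ε / (2 * (D + 1))) * D :=
      mul_le_mul_of_nonneg_right h1 hD0
    have h3 : (ε / (2 * (D + 1))) * D ≤ ε / 2 := by
      rw [div_mul_eq_mul_div, div_le_div_iff₀ (by positivity) (by norm_num)]
      nlinarith
    linarith
  have h9 : ε ≤ t * D := by rw [hε]; linarith
  linarith
end

section
/- Define x_1 = 2 and x_{n+1} = 1/n + (1 - 1/n)(x_n + 1/2) for n ≥ 1. Then x_n > n/4 for all n ≥ 3; in particular {x_n} is unbounded. -/
theorem stmt_14 (x : ℕ → ℝ) (h1 : x 1 = 2)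
    (hrec : ∀ n ≥ 1, x (n + 1) = 1 / n + (1 - 1 / n) * (x n + 1 / 2)) :
    (∀ n ≥ 3, x n > n / 4) ∧ ¬ ∃ M, ∀ n, x n ≤ M := by
  have key : ∀ n ≥ 3, x n > n / 4 := by
    intro n hn
    induction n with
    | zero => omega
    | succ m ih =>
      rcases Nat.lt_or_ge m 3 with h | h
      · -- m = 2, base case n = 3
        have hm2 : m = 2 := by omega
        subst hm2
        have h2 := hrec 1 le_rfl
        have h3 := hrec 2 (by norm_num)
        norm_num at h2 h3 ⊢
        linarith
      · have ihm := ih h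
        have hx := hrec m (by omega)
        have hmr : (3:ℝ) ≤ (m:ℝ) := by exact_mod_cast h
        have hm0 : (0:ℝ) < (m:ℝ) := by linarith
        have hx' : (m:ℝ) * x (m+1) = 1 + ((m:ℝ) - 1) * (x m + 1/2) := by
          rw [hx]; field_simp
        push_cast
        nlinarith [mul_pos (show (0:ℝ) < (m:ℝ) - 1 by linarith)
          (show (0:ℝ) < x m - (m:ℝ)/4 by linarith)]
  refine ⟨key, ?_⟩
  rintro ⟨M, hM⟩
  obtain ⟨k, hk⟩ := exists_nat_gt (4 * M)
  have h3 : k + 3 ≥ 3 := by omega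
  have := key (k + 3) h3
  have hle := hM (k + 3)
  have : ((k:ℝ) + 3) / 4 > M := by
    push_cast
    linarith
  push_cast at *
  linarith
end

section
/- Define x_1 = 2, y_n = P_{[0,∞)}(x_n + 1/2), and x_{n+1} = 1/n + (1 - 1/n)·y_n. Then liminf_{n→∞} |x_n - y_n| = 1/2 ≠ 0. -/
open Filter

theorem stmt_15 (x y : ℕ → ℝ) (h1 : x 1 = 2)
    (hy : ∀ n ≥ 1, y n = max (x n + 1 / 2) 0)
    (hrec : ∀ n ≥ 1, x (n + 1) = 1 / n + (1 - 1 / n) * y n) :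
    liminf (fun n => |x n - y n|) atTop = 1 / 2 := by
  have hx : ∀ n ≥ 1, 0 ≤ x n := by
    intro n hn
    match n, hn with
    | 1, _ => rw [h1]; norm_num
    | (m+2), _ =>
      rw [hrec (m+1) (by omega)]
      have h0 : (0:ℝ) ≤ y (m+1) := by
        rw [hy (m+1) (by omega)]; exact le_max_right _ _
      have hm1 : (1:ℝ) ≤ ((m+1 : ℕ) : ℝ) := by exact_mod_cast Nat.one_le_iff_ne_zero.2 (by omega)
      have h2 : (1:ℝ) / ((m+1 : ℕ) : ℝ) ≤ 1 := by
        rw [div_le_one (by linarith)]; exact hm1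
      have h3 : (0:ℝ) ≤ 1 / ((m+1 : ℕ) : ℝ) := by positivity
      nlinarith [mul_nonneg (by linarith : (0:ℝ) ≤ 1 - 1/((m+1:ℕ):ℝ)) h0]
  have heq : ∀ᶠ n in atTop, |x n - y n| = 1/2 := by
    filter_upwards [eventually_ge_atTop 1] with n hn
    rw [hy n hn, max_eq_left (by have := hx n hn; linarith)]
    rw [show x n - (x n + 1/2) = -(1/2) by ring, abs_neg, abs_of_nonneg (by norm_num)]
  rw [liminf_congr heq, liminf_const]
end

section
/- Define real sequences by x_1 = 2, y_n = (1/2)x_n clipped to [0,∞) (i.e., y_n = max((1/2)x_n, 0)), z_n = (1/2)(y_n + x_n), and x_{n+1} = 1/√n + (1 - 1/√n - 1/n²)z_n + 1/n². Then the sequence x_n converges to 0 as n → ∞. -/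
open Filter

/-- If `x (n+1) ≤ q * x n + e n` with `0 ≤ q < 1`, `x n ≥ 0`, and `e → 0`, then `x → 0`. -/
lemma aux_contraction (x e : ℕ → ℝ) (q : ℝ) (hq0 : 0 ≤ q) (hq1 : q < 1)
    (hx : ∀ n, 0 ≤ x n) (hrec : ∀ n, x (n + 1) ≤ q * x n + e n)
    (he : Tendsto e atTop (nhds 0)) : Tendsto x atTop (nhds 0) := by
  have key : ∀ ε > (0 : ℝ), ∀ᶠ n in atTop, x n ≤ ε := by
    intro ε hε
    have hq1' : (0:ℝ) < 1 - q := by linarith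
    have hδ : (0:ℝ) < ε * (1 - q) / 2 := by positivity
    have hev : ∀ᶠ n in atTop, e n ≤ ε * (1 - q) / 2 := by
      have := (he.eventually (Metric.ball_mem_nhds (0:ℝ) hδ))
      filter_upwards [this] with n hn
      have : |e n| < ε * (1 - q) / 2 := by simpa [Real.dist_eq] using hn
      linarith [le_abs_self (e n)]
    obtain ⟨N, hN⟩ := hev.exists_forall_of_atTop
    -- x (N + k) ≤ q^k * x N + ε/2
    have step : ∀ k, x (N + k) ≤ q ^ k * x N + ε / 2 := by
      intro k
      induction k with
      | zero => simp; linarith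
      | succ k ih =>
        have h1 := hrec (N + k)
        have h2 := hN (N + k) (Nat.le_add_right _ _)
        have h3 : q * x (N + k) ≤ q * (q ^ k * x N + ε / 2) :=
          mul_le_mul_of_nonneg_left ih hq0
        have : x (N + k + 1) ≤ q * (q ^ k * x N + ε / 2) + ε * (1 - q) / 2 := by
          linarith
        calc x (N + (k + 1)) = x (N + k + 1) := by ring_nf
          _ ≤ q * (q ^ k * x N + ε / 2) + ε * (1 - q) / 2 := this
          _ = q ^ (k+1) * x N + (q * ε / 2 + ε * (1 - q) / 2) := by ring
          _ ≤ q ^ (k+1) * x N + ε / 2 := by nlinarith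
    -- choose K with q^K * x N ≤ ε/2
    have hpow : Tendsto (fun k => q ^ k * x N) atTop (nhds 0) := by
      simpa using (tendsto_pow_atTop_nhds_zero_of_lt_one hq0 hq1).mul_const (x N)
    have : ∀ᶠ k in atTop, q ^ k * x N ≤ ε / 2 := by
      have hδ2 : (0:ℝ) < ε / 2 := by positivity
      filter_upwards [hpow.eventually (Metric.ball_mem_nhds (0:ℝ) hδ2)] with k hk
      have : |q ^ k * x N| < ε / 2 := by simpa [Real.dist_eq, abs_mul, abs_pow] using hk
      linarith [le_abs_self (q ^ k * x N)]
    obtain ⟨K, hK⟩ := this.exists_forall_of_atTop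
    rw [eventually_atTop]
    refine ⟨N + K, fun n hn => ?_⟩
    obtain ⟨k, rfl⟩ := Nat.exists_eq_add_of_le hn
    have hle : q ^ (K + k) * x N ≤ q ^ K * x N :=
      mul_le_mul_of_nonneg_right (pow_le_pow_of_le_one hq0 hq1.le (Nat.le_add_right _ _)) (hx N)
    have := step (K + k)
    have := hK K le_rfl
    calc x (N + K + k) = x (N + (K + k)) := by ring_nf
      _ ≤ q ^ (K + k) * x N + ε / 2 := step (K + k)
      _ ≤ q ^ K * x N + ε / 2 := by linarith
      _ ≤ ε := by linarith
  rw [Metric.tendsto_atTop]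
  intro ε hε
  have := key (ε / 2) (by positivity)
  rw [eventually_atTop] at this
  obtain ⟨N, hN⟩ := this
  refine ⟨N, fun n hn => ?_⟩
  have h1 := hx n
  have h2 := hN n hn
  rw [Real.dist_eq]
  rw [abs_sub_lt_iff]
  constructor <;> linarith

theorem stmt_17 (x y z : ℕ → ℝ) (h1 : x 1 = 2)
    (hy : ∀ n ≥ 1, y n = max ((1 / 2) * x n) 0)
    (hz : ∀ n ≥ 1, z n = (1 / 2) * (y n + x n))
    (hrec : ∀ n ≥ 1, x (n + 1) =
      1 / Real.sqrt n + (1 - 1 / Real.sqrt n - 1 / (n : ℝ) ^ 2) * z n + 1 / (n : ℝ) ^ 2) :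
    Tendsto x atTop (nhds 0) := by
  -- basic facts for n ≥ 2
  have hsqrt2 : (4:ℝ)/3 ≤ Real.sqrt 2 := by
    nlinarith [Real.sqrt_nonneg 2, Real.sq_sqrt (show (0:ℝ) ≤ 2 by norm_num)]
  -- key step: for n ≥ 2 with x n ≥ 0, we have x (n+1) ≥ 0 and the contraction bound
  have key : ∀ n : ℕ, 2 ≤ n → 0 ≤ x n →
      0 ≤ x (n + 1) ∧ x (n + 1) ≤ 3/4 * x n + (1 / Real.sqrt n + 1 / (n:ℝ)^2) := by
    intro n hn2 hxn
    have hn1 : 1 ≤ n := by omega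
    have hn2' : (2:ℝ) ≤ (n:ℝ) := by exact_mod_cast hn2
    have hyn : y n = (1/2) * x n := by
      rw [hy n hn1]; exact max_eq_left (by linarith)
    have hzn : z n = (3/4) * x n := by
      rw [hz n hn1, hyn]; ring
    have hsn : (4:ℝ)/3 ≤ Real.sqrt n := by
      calc (4:ℝ)/3 ≤ Real.sqrt 2 := hsqrt2
        _ ≤ Real.sqrt n := Real.sqrt_le_sqrt hn2'
    have ha0 : 0 ≤ 1 / Real.sqrt n := by positivity
    have ha : 1 / Real.sqrt n ≤ 3/4 := by
      have := one_div_le_one_div_of_le (by norm_num : (0:ℝ) < 4/3) hsn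
      linarith [this]
    have hb0 : 0 ≤ 1 / (n:ℝ)^2 := by positivity
    have hb : 1 / (n:ℝ)^2 ≤ 1/4 := by
      have h4 : (4:ℝ) ≤ (n:ℝ)^2 := by nlinarith
      have := one_div_le_one_div_of_le (by norm_num : (0:ℝ) < 4) h4
      linarith [this]
    have hx1 := hrec n hn1
    rw [hzn] at hx1
    constructor
    · rw [hx1]; nlinarith
    · rw [hx1]; nlinarith
  -- x 2 = 1/2
  have hx2 : x 2 = 1/2 := by
    have h := hrec 1 le_rfl
    have hy1 : y 1 = 1 := by rw [hy 1 le_rfl, h1]; norm_num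
    have hz1 : z 1 = 3/2 := by rw [hz 1 le_rfl, hy1, h1]; norm_num
    rw [hz1] at h
    rw [h]; norm_num [Real.sqrt_one]
  have hnonneg : ∀ k : ℕ, 0 ≤ x (k + 2) := by
    intro k
    induction k with
    | zero => rw [hx2]; norm_num
    | succ k ih =>
      have := (key (k + 2) (by omega) ih).1
      have h3 : k + 1 + 2 = k + 2 + 1 := by omega
      rw [h3]; exact this
  set E : ℕ → ℝ := fun k => 1 / Real.sqrt ((k:ℝ) + 2) + 1 / ((k:ℝ) + 2)^2 with hE
  have hrec' : ∀ k, x (k + 2 + 1) ≤ 3/4 * x (k + 2) + E k := by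
    intro k
    have := (key (k + 2) (by omega) (hnonneg k)).2
    have hc : ((k + 2 : ℕ) : ℝ) = (k:ℝ) + 2 := by push_cast; ring
    rw [hc] at this
    exact this
  have h1' : Tendsto (fun k : ℕ => (k:ℝ) + 2) atTop atTop :=
    tendsto_atTop_add_const_right _ 2 tendsto_natCast_atTop_atTop
  have hE0 : Tendsto E atTop (nhds 0) := by
    have t1 : Tendsto (fun k : ℕ => 1 / Real.sqrt ((k:ℝ) + 2)) atTop (nhds 0) := by
      have heq : ∀ k : ℕ, 1 / Real.sqrt ((k:ℝ) + 2) = Real.sqrt (1 / ((k:ℝ) + 2)) := by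
        intro k; rw [one_div, one_div, Real.sqrt_inv]
      simp only [heq]
      have hin : Tendsto (fun k : ℕ => 1 / ((k:ℝ) + 2)) atTop (nhds 0) := by
        simpa [one_div, Function.comp_def] using tendsto_inv_atTop_zero.comp h1'
      have := (Real.continuous_sqrt.tendsto' 0 0 Real.sqrt_zero).comp hin
      exact this
    have t2 : Tendsto (fun k : ℕ => 1 / ((k:ℝ) + 2)^2) atTop (nhds 0) := by
      have hsq : Tendsto (fun k : ℕ => ((k:ℝ) + 2)^2) atTop atTop :=
        (tendsto_pow_atTop (by norm_num : (2:ℕ) ≠ 0)).comp h1'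
      simpa [one_div, Function.comp_def] using tendsto_inv_atTop_zero.comp hsq
    rw [hE]
    simpa [one_div] using t1.add t2
  have hmain : Tendsto (fun k => x (k + 2)) atTop (nhds 0) :=
    aux_contraction (fun k => x (k + 2)) E (3/4) (by norm_num) (by norm_num)
      hnonneg hrec' hE0
  exact (tendsto_add_atTop_iff_nat 2).mp hmain
end
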